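/- arXiv:2306.13440 — 6 statements merged into one kernel-verified Lean document; each statement's English description precedes it below -/
import Mathlib

section
/- Let Δ ⊆ ℝ^d be a nonempty convex compact set containing 0, R : Δ → ℝ convex and L-Lipschitz for ‖·‖₂, and R̄(δ) = inf_{δ'∈Δ}{R(δ') + L‖δ−δ'‖₂} its convex L-Lipschitz extension. Let η > 0 and let λ₀ ∈ ℝ^d be a subgradient of R̄ at 0. Given an arbitrary sequence (δ_t)_{t≥1} with δ_t ∈ Δ for all t, define recursively: γ_t is any maximizer of γ ↦ ⟨λ_t, γ⟩ − R̄(γ) over the closed Euclidean ball Δ_{δ_t} of center δ_t and radius diam(Δ), and λ_{t+1} = λ_t − η(γ_t − δ_t). Then ‖λ_t‖₂ ≤ L + 2η·diam(Δ) for all t. -/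
/-!
Write `r = γ - δ` and `λ' = λ - η r` for one step of the recursion. If `⟪r, λ'⟫ ≥ 0`, then
`‖λ‖² = ‖λ' + η r‖² ≥ ‖λ'‖²`. Otherwise the reflection of `r` across `λ'ᗮ` is `r + s λ'` with
`s > 0`, so `γ + s λ'` lies in the ball around `δ`; comparing it with the maximizer `γ` through
the `L`-Lipschitz function `R̄` gives `⟪λ, λ'⟫ ≤ L ‖λ'‖`, hence `‖λ'‖ ≤ L + η ‖r‖`. Thus
`‖λ_{t+1}‖ ≤ max ‖λ_t‖ (L + η diam Δ)`, and since a subgradient of an `L`-Lipschitz function has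
norm at most `L`, induction gives `‖λ_t‖ ≤ L + η diam Δ`.
-/

open Metric Set
open scoped RealInnerProductSpace NNReal

theorem LipschitzOnWith.lipschitzWith_iInf_add_mul_dist {α : Type*} [PseudoMetricSpace α]
    {f : α → ℝ} {s : Set α} {K : ℝ≥0} (hf : LipschitzOnWith K f s) :
    LipschitzWith K fun y : α => ⨅ x : s, f x + K * dist y x := by
  rcases isEmpty_or_nonempty s with hs | hs
  · simpa only [Real.iInf_of_isEmpty] using LipschitzWith.const' (0 : ℝ)
  have hbdd : ∀ y : α, BddBelow (range fun x : s => f x + K * dist y x) := by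
    obtain ⟨z⟩ := hs
    refine fun y => ⟨f z - K * dist y z, ?_⟩
    rintro _ ⟨x, rfl⟩
    calc f z - K * dist y z ≤ f x + K * dist (z : α) x - K * dist y z := by
          gcongr; exact hf.le_add_mul z.2 x.2
      _ ≤ f x + K * dist y x := by
          nlinarith [dist_triangle_left (z : α) x y, K.coe_nonneg]
  refine LipschitzWith.of_le_add_mul K fun y y' => ?_
  rw [← sub_le_iff_le_add]
  refine le_ciInf fun x => ?_
  calc (⨅ x : s, f x + K * dist y x) - K * dist y y' ≤ f x + K * dist y x - K * dist y y' := by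
        gcongr; exact ciInf_le (hbdd y) x
    _ ≤ f x + K * dist y' x := by nlinarith [dist_triangle y y' x, K.coe_nonneg]

section InnerProductSpace

variable {E : Type*} [NormedAddCommGroup E] [InnerProductSpace ℝ E]

theorem LipschitzWith.norm_le_of_le_add_inner {f : E → ℝ} {K : ℝ≥0} (hf : LipschitzWith K f)
    {x v : E} (hv : ∀ y, f x + ⟪v, y - x⟫ ≤ f y) : ‖v‖ ≤ K := by
  have h := hv (x + v)
  rw [add_sub_cancel_left, real_inner_self_eq_norm_sq] at h
  have hlip : f (x + v) ≤ f x + K * ‖v‖ := by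
    simpa only [dist_eq_norm, add_sub_cancel_left] using hf.le_add_mul (x + v) x
  nlinarith [norm_nonneg v]

theorem norm_sub_smul_two_inner_div_sq (r v : E) :
    ‖r - (2 * ⟪r, v⟫ / ‖v‖ ^ 2) • v‖ = ‖r‖ := by
  rcases eq_or_ne v 0 with rfl | hv
  · simp
  have hv2 : ‖v‖ ^ 2 ≠ 0 := by positivity
  rw [← sq_eq_sq₀ (norm_nonneg _) (norm_nonneg _), norm_sub_sq_real, real_inner_smul_right,
    norm_smul, mul_pow, Real.norm_eq_abs, sq_abs]
  field_simp
  ring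

theorem LipschitzWith.inner_sub_le_of_isMaxOn {f : E → ℝ} {K : ℝ≥0} (hf : LipschitzWith K f)
    {lam γ : E} {s : Set E} (hγ : IsMaxOn (fun g => ⟪lam, g⟫ - f g) s γ) {g : E} (hg : g ∈ s) :
    ⟪lam, g - γ⟫ ≤ K * ‖g - γ‖ := by
  have hmax : ⟪lam, g⟫ - f g ≤ ⟪lam, γ⟫ - f γ := isMaxOn_iff.1 hγ g hg
  have hlip : f g ≤ f γ + K * ‖g - γ‖ := by
    simpa only [dist_eq_norm] using hf.le_add_mul g γ
  rw [inner_sub_right]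
  linarith

theorem LipschitzWith.norm_sub_smul_sub_le_max {f : E → ℝ} {K : ℝ≥0} (hf : LipschitzWith K f)
    {lam γ δ : E} {D η : ℝ} (hη : 0 ≤ η) (hγmem : γ ∈ closedBall δ D)
    (hγ : IsMaxOn (fun g => ⟪lam, g⟫ - f g) (closedBall δ D) γ) :
    ‖lam - η • (γ - δ)‖ ≤ max ‖lam‖ (K + η * D) := by
  set r := γ - δ
  set v := lam - η • r
  have hlam : lam = v + η • r := by simp only [v, sub_add_cancel]
  have hr : ‖r‖ ≤ D := by rwa [mem_closedBall, dist_eq_norm] at hγmem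
  rcases le_or_gt 0 ⟪r, v⟫ with hrv | hrv
  · refine le_max_of_le_left ?_
    rw [← sq_le_sq₀ (norm_nonneg _) (norm_nonneg _), hlam, norm_add_sq_real,
      real_inner_smul_right, real_inner_comm]
    nlinarith [sq_nonneg ‖η • r‖]
  refine le_max_of_le_right ?_
  have hv : 0 < ‖v‖ := norm_pos_iff.2 fun h => by simp [h] at hrv
  set c := 2 * ⟪r, v⟫ / ‖v‖ ^ 2
  have hc : c < 0 := div_neg_of_neg_of_pos (by linarith) (by positivity)
  -- `γ - c • v` is `γ` moved along the reflection of `r` across `vᗮ`, so it stays in the ball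
  have hmem : γ - c • v ∈ closedBall δ D := by
    rw [mem_closedBall, dist_eq_norm, sub_right_comm, norm_sub_smul_two_inner_div_sq]
    exact hr
  have hcmp := hf.inner_sub_le_of_isMaxOn hγ hmem
  rw [sub_sub_cancel_left, inner_neg_right, norm_neg, real_inner_smul_right, norm_smul,
    Real.norm_eq_abs, abs_of_neg hc] at hcmp
  have hlamv : ⟪lam, v⟫ ≤ K * ‖v‖ := by nlinarith
  have hrv' : -(‖r‖ * ‖v‖) ≤ ⟪r, v⟫ := neg_le_of_abs_le (abs_real_inner_le_norm r v)
  rw [hlam, inner_add_left, real_inner_self_eq_norm_sq, real_inner_smul_left] at hlamv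
  nlinarith [mul_le_mul_of_nonneg_right hr hv.le]

end InnerProductSpace

theorem stmt1_general {d : ℕ} (Δ : Set (EuclideanSpace ℝ (Fin d)))
    (L : NNReal) (R : EuclideanSpace ℝ (Fin d) → ℝ)
    (hRlip : LipschitzOnWith L R Δ)
    (Rbar : EuclideanSpace ℝ (Fin d) → ℝ)
    (hRbar : ∀ δ, Rbar δ =
      ⨅ δ' : Δ, (R δ' + (L : ℝ) * ‖δ - (δ' : EuclideanSpace ℝ (Fin d))‖))
    (η : ℝ) (hη : 0 < η)
    (lam γ δ : ℕ → EuclideanSpace ℝ (Fin d))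
    (hlam0 : ∀ y, Rbar 0 + ⟪lam 0, y - 0⟫ ≤ Rbar y)
    (hγmem : ∀ t, γ t ∈ closedBall (δ t) (diam Δ))
    (hγmax : ∀ t, ∀ g ∈ closedBall (δ t) (diam Δ),
      ⟪lam t, g⟫ - Rbar g ≤ ⟪lam t, γ t⟫ - Rbar (γ t))
    (hrec : ∀ t, lam (t + 1) = lam t - η • (γ t - δ t)) :
    ∀ t, ‖lam t‖ ≤ (L : ℝ) + 2 * η * diam Δ := by
  have hRbarlip : LipschitzWith L Rbar := by
    have hfun : Rbar = fun δ => ⨅ δ' : Δ, R δ' + L * dist δ (δ' : EuclideanSpace ℝ (Fin d)) := by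
      funext δ; simp only [hRbar, dist_eq_norm]
    exact hfun ▸ hRlip.lipschitzWith_iInf_add_mul_dist
  have hηD : 0 ≤ η * diam Δ := mul_nonneg hη.le diam_nonneg
  have hbound : ∀ t, ‖lam t‖ ≤ L + η * diam Δ := by
    intro t
    induction t with
    | zero => linarith [hRbarlip.norm_le_of_le_add_inner hlam0]
    | succ t ih =>
      rw [hrec t]
      exact (hRbarlip.norm_sub_smul_sub_le_max hη.le (hγmem t)
        (isMaxOn_iff.2 (hγmax t))).trans (max_le ih le_rfl)
  intro t
  linarith [hbound t]

/-- boundedness of the dual iterates: with `λ₀` a subgradient of the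
extension `R̄` at `0 ∈ Δ`, the dual gradient descent iterates
`λ_{t+1} = λ_t − η(γ_t − δ_t)`, where `γ_t` maximizes `γ ↦ ⟨λ_t, γ⟩ − R̄(γ)` over the
closed ball of center `δ_t ∈ Δ` and radius `diam Δ`, satisfy
`‖λ_t‖ ≤ L + 2η·diam(Δ)` for all `t`. -/
theorem stmt1 {d : ℕ} (Δ : Set (EuclideanSpace ℝ (Fin d)))
    (hΔne : Δ.Nonempty) (hΔconv : Convex ℝ Δ) (hΔcomp : IsCompact Δ)
    (h0Δ : (0 : EuclideanSpace ℝ (Fin d)) ∈ Δ)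
    (L : NNReal) (R : EuclideanSpace ℝ (Fin d) → ℝ)
    (hRconv : ConvexOn ℝ Δ R) (hRlip : LipschitzOnWith L R Δ)
    (Rbar : EuclideanSpace ℝ (Fin d) → ℝ)
    (hRbar : ∀ δ, Rbar δ =
      ⨅ δ' : Δ, (R δ' + (L : ℝ) * ‖δ - (δ' : EuclideanSpace ℝ (Fin d))‖))
    (η : ℝ) (hη : 0 < η)
    (lam γ δ : ℕ → EuclideanSpace ℝ (Fin d))
    (hδ : ∀ t, δ t ∈ Δ)
    (hlam0 : ∀ y, Rbar 0 + ⟪lam 0, y - 0⟫ ≤ Rbar y)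
    (hγmem : ∀ t, γ t ∈ closedBall (δ t) (diam Δ))
    (hγmax : ∀ t, ∀ g ∈ closedBall (δ t) (diam Δ),
      ⟪lam t, g⟫ - Rbar g ≤ ⟪lam t, γ t⟫ - Rbar (γ t))
    (hrec : ∀ t, lam (t + 1) = lam t - η • (γ t - δ t)) :
    ∀ t, ‖lam t‖ ≤ (L : ℝ) + 2 * η * diam Δ :=
  stmt1_general Δ L R hRlip Rbar hRbar η hη lam γ δ hlam0 hγmem hγmax hrec
end

section
/- Let Δ ⊆ ℝ^d be a nonempty convex compact set, R : Δ → ℝ convex and L-Lipschitz for ‖·‖₂, and R̄(δ) = inf_{δ'∈Δ}{R(δ') + L‖δ−δ'‖₂}. Let λ₀ ∈ ℝ^d be arbitrary, η > 0, and (δ_t)_{t≥1} an arbitrary sequence in Δ. Define recursively: γ_t is any maximizer of γ ↦ ⟨λ_t, γ⟩ − R̄(γ) over Δ_{δ_t}, and λ_{t+1} = λ_t − η(γ_t − δ_t) (equivalently λ_{t+1} = λ_t + η(δ_t − γ_t)). Then with Λ = ∪_{δ∈Δ̄} ∂R̄(δ) (the union over Δ̄ of the subdifferentials of R̄), for all t: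 ‖λ_t‖₂ ≤ L + 2η·diam(Δ) + dist(λ₀, Λ + B(0, 2η·diam(Δ))), where B(0,r) is the closed Euclidean ball of radius r centered at 0, the sum of sets is the Minkowski sum, and dist is the Euclidean distance to a set. -/
/-!
`R̄` is the McShane extension of `R`, hence `L`-Lipschitz, so every subgradient of `R̄` has norm
at most `L`; and `Λ ∋ 0`, the subgradient of `R̄` at a minimizer of `R` on `Δ`. Hence
`Λ + B(0, 2ηD)` (`D = diam Δ`) is a nonempty subset of the ball of radius `L + 2ηD`, and
`‖λ₀‖ ≤ L + 2ηD + dist(λ₀, Λ + B(0, 2ηD))`. It therefore suffices to show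
`‖λ_t‖ ≤ max ‖λ₀‖ (L + 2ηD)`. A step changes the norm by at most `ηD`, and it does not increase
the norm once `‖λ_t‖ ≥ L + ηD`: with `w = γ_t - δ_t`, a move from `γ_t` in any direction `h`
with `⟪h, w⟫ < 0` stays in `Δ_{δ_t}` for a while, so maximality of `γ_t` and the Lipschitz
bound give `⟪λ_t, h⟫ ≤ L ‖h‖`. Choosing `h = λ_t - (η/2) w` shows that `2 ⟪λ_t, w⟫ < η ‖w‖²`
would force `‖λ_t‖² ≤ L² + η² ‖w‖² / 4`, which is incompatible with `‖λ_t‖ ≥ L + η ‖w‖`.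
-/

open Metric Set
open scoped RealInnerProductSpace Pointwise NNReal

section McShane

variable {α : Type*} [PseudoMetricSpace α]

noncomputable def mcShaneExtension (f : α → ℝ) (s : Set α) (K : ℝ≥0) (y : α) : ℝ :=
  ⨅ x : s, f x + K * dist y x

variable {f : α → ℝ} {s : Set α} {K : ℝ≥0}

theorem LipschitzOnWith.bddBelow_range_add_mul_dist (hf : LipschitzOnWith K f s)
    (hs : s.Nonempty) (y : α) : BddBelow (range fun x : s => f x + K * dist y x) := by
  obtain ⟨z, hz⟩ := hs
  refine ⟨f z - K * dist y z, ?_⟩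
  rintro _ ⟨x, rfl⟩
  calc f z - K * dist y z ≤ f x + K * dist z x - K * dist y z := by
        gcongr; exact hf.le_add_mul hz x.2
    _ ≤ f x + K * (dist y z + dist y x) - K * dist y z := by
        gcongr; exact dist_triangle_left z x y
    _ = f x + K * dist y x := by ring

theorem LipschitzOnWith.mcShaneExtension_le (hf : LipschitzOnWith K f s) {x : α} (hx : x ∈ s)
    (y : α) : mcShaneExtension f s K y ≤ f x + K * dist y x :=
  ciInf_le (hf.bddBelow_range_add_mul_dist ⟨x, hx⟩ y) ⟨x, hx⟩

theorem LipschitzOnWith.lipschitzWith_mcShaneExtension (hf : LipschitzOnWith K f s)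
    (hs : s.Nonempty) : LipschitzWith K (mcShaneExtension f s K) := by
  have := hs.to_subtype
  refine LipschitzWith.of_le_add_mul K fun x y => ?_
  rw [← sub_le_iff_le_add]
  refine le_ciInf fun z => ?_
  rw [sub_le_iff_le_add]
  calc mcShaneExtension f s K x ≤ f z + K * dist x z := hf.mcShaneExtension_le z.2 x
    _ ≤ f z + K * dist y z + K * dist x y := by
        rw [add_assoc, ← mul_add, add_comm (dist y z)]
        gcongr
        exact dist_triangle _ _ _

theorem LipschitzOnWith.isMinOn_mcShaneExtension (hf : LipschitzOnWith K f s) {z : α}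
    (hz : z ∈ s) (hmin : IsMinOn f s z) : IsMinOn (mcShaneExtension f s K) univ z := by
  have := Nonempty.intro (⟨z, hz⟩ : s)
  intro y _
  calc mcShaneExtension f s K z ≤ f z := by simpa using hf.mcShaneExtension_le hz z
    _ ≤ mcShaneExtension f s K y := le_ciInf fun x =>
        le_add_of_le_of_nonneg (hmin x.2) (by positivity)

end McShane

theorem Metric.dist_sub_le_infDist_of_subset_closedBall {α : Type*} [PseudoMetricSpace α]
    {s : Set α} {a x : α} {r : ℝ} (hs : s.Nonempty) (hsub : s ⊆ closedBall a r) :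
    dist x a - r ≤ infDist x s :=
  (le_infDist hs).2 fun y hy => by
    have := mem_closedBall.1 (hsub hy)
    have := dist_triangle x y a
    linarith

theorem le_max_of_succ_le_add_of_lt_imp_succ_le {u : ℕ → ℝ} {B c : ℝ}
    (hstep : ∀ t, u (t + 1) ≤ u t + c) (hdesc : ∀ t, B < u t → u (t + 1) ≤ u t) (t : ℕ) :
    u t ≤ max (u 0) (B + c) := by
  induction t with
  | zero => exact le_max_left _ _
  | succ t ih =>
    rcases le_or_gt (u t) B with hsmall | hbig
    · exact (hstep t).trans ((add_le_add_left hsmall c).trans (le_max_right _ _))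
    · exact (hdesc t hbig).trans ih

section InnerProduct

variable {E : Type*} [NormedAddCommGroup E] [InnerProductSpace ℝ E]

theorem exists_pos_add_smul_mem_closedBall {δ γ h : E} {D : ℝ} (hγ : γ ∈ closedBall δ D)
    (hh : ⟪h, γ - δ⟫ < 0) : ∃ t : ℝ, 0 < t ∧ γ + t • h ∈ closedBall δ D := by
  set w := γ - δ
  have hh0 : h ≠ 0 := by rintro rfl; simp at hh
  have hnorm : 0 < ‖h‖ ^ 2 := by positivity
  set t := -⟪h, w⟫ / ‖h‖ ^ 2
  have ht : 0 < t := div_pos (neg_pos.2 hh) hnorm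
  have htt : t * ‖h‖ ^ 2 = -⟪h, w⟫ := div_mul_cancel₀ _ hnorm.ne'
  have hsq : ‖w + t • h‖ ^ 2 = ‖w‖ ^ 2 + t * ⟪h, w⟫ := by
    rw [norm_add_sq_real, real_inner_smul_right, norm_smul, mul_pow, Real.norm_of_nonneg ht.le,
      real_inner_comm]
    linear_combination t * htt
  have hle : ‖w + t • h‖ ≤ ‖w‖ :=
    (pow_le_pow_iff_left₀ (norm_nonneg _) (norm_nonneg _) two_ne_zero).1 (by nlinarith)
  refine ⟨t, ht, mem_closedBall_iff_norm.2 ?_⟩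
  rw [add_sub_right_comm]
  exact hle.trans (mem_closedBall_iff_norm.1 hγ)

theorem norm_sq_le_of_inner_le {x h : E} {K : ℝ} (hxh : ⟪x, h⟫ ≤ K * ‖h‖) :
    ‖x‖ ^ 2 ≤ K ^ 2 + ‖x - h‖ ^ 2 := by
  rw [norm_sub_sq_real]
  nlinarith [sq_nonneg (K - ‖h‖)]

namespace LipschitzWith

variable {f : E → ℝ} {K : ℝ≥0}

theorem norm_le_of_forall_add_inner_le (hf : LipschitzWith K f) {x l : E}
    (hl : ∀ y, f x + ⟪l, y - x⟫ ≤ f y) : ‖l‖ ≤ K := by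
  have hsub := hl (x + l)
  have hlip := hf.le_add_mul (x + l) x
  rw [add_sub_cancel_left, real_inner_self_eq_norm_sq] at hsub
  rw [dist_eq_norm, add_sub_cancel_left] at hlip
  nlinarith [norm_nonneg l, K.coe_nonneg]

theorem inner_le_of_isMaxOn (hf : LipschitzWith K f) {l δ γ h : E} {D : ℝ}
    (hγ : γ ∈ closedBall δ D) (hmax : IsMaxOn (fun g => ⟪l, g⟫ - f g) (closedBall δ D) γ)
    (hh : ⟪h, γ - δ⟫ < 0) : ⟪l, h⟫ ≤ K * ‖h‖ := by
  obtain ⟨t, ht, hmem⟩ := exists_pos_add_smul_mem_closedBall hγ hh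
  have hopt := isMaxOn_iff.1 hmax _ hmem
  have hlip := hf.le_add_mul (γ + t • h) γ
  rw [inner_add_right, real_inner_smul_right] at hopt
  rw [dist_eq_norm, add_sub_cancel_left, norm_smul, Real.norm_of_nonneg ht.le] at hlip
  nlinarith

theorem norm_sub_smul_le_norm_of_isMaxOn (hf : LipschitzWith K f) {l δ γ : E} {D η : ℝ}
    (hη : 0 < η) (hγ : γ ∈ closedBall δ D)
    (hmax : IsMaxOn (fun g => ⟪l, g⟫ - f g) (closedBall δ D) γ) (hl : K + η * D ≤ ‖l‖) :
    ‖l - η • (γ - δ)‖ ≤ ‖l‖ := by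
  set w := γ - δ
  have hw : ‖w‖ ≤ D := mem_closedBall_iff_norm.1 hγ
  suffices h : η * ‖w‖ ^ 2 ≤ 2 * ⟪l, w⟫ by
    refine (pow_le_pow_iff_left₀ (norm_nonneg _) (norm_nonneg _) two_ne_zero).1 ?_
    rw [norm_sub_sq_real, real_inner_smul_right, norm_smul, mul_pow, Real.norm_of_nonneg hη.le]
    nlinarith
  by_contra! hlt
  have hw0 : 0 < ‖w‖ := by
    by_contra! h0
    simp [norm_le_zero_iff.1 h0] at hlt
  have hdesc : ⟪l - (η / 2) • w, w⟫ < 0 := by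
    rw [inner_sub_left, real_inner_smul_left, real_inner_self_eq_norm_sq]
    linarith
  have hK := norm_sq_le_of_inner_le (hf.inner_le_of_isMaxOn hγ hmax hdesc)
  rw [sub_sub_cancel, norm_smul, Real.norm_of_nonneg (by positivity)] at hK
  have hl' : K + η * ‖w‖ ≤ ‖l‖ := le_trans (by gcongr) hl
  nlinarith [K.coe_nonneg, mul_pos hη hw0]

theorem norm_le_max_of_forall_isMaxOn (hf : LipschitzWith K f) {l γ δ : ℕ → E} {D η : ℝ}
    (hη : 0 < η) (hγ : ∀ t, γ t ∈ closedBall (δ t) D)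
    (hmax : ∀ t, IsMaxOn (fun g => ⟪l t, g⟫ - f g) (closedBall (δ t) D) (γ t))
    (hrec : ∀ t, l (t + 1) = l t - η • (γ t - δ t)) (t : ℕ) :
    ‖l t‖ ≤ max ‖l 0‖ (K + 2 * η * D) := by
  have hstep (t : ℕ) : ‖l (t + 1)‖ ≤ ‖l t‖ + η * D := by
    rw [hrec]
    refine (_root_.norm_sub_le _ _).trans ?_
    rw [norm_smul, Real.norm_of_nonneg hη.le]
    gcongr
    exact mem_closedBall_iff_norm.1 (hγ t)
  have hdesc (t : ℕ) (ht : K + η * D < ‖l t‖) : ‖l (t + 1)‖ ≤ ‖l t‖ := by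
    rw [hrec]
    exact hf.norm_sub_smul_le_norm_of_isMaxOn hη (hγ t) (hmax t) ht.le
  convert le_max_of_succ_le_add_of_lt_imp_succ_le (u := fun t => ‖l t‖) hstep hdesc t using 2
  ring

end LipschitzWith

end InnerProduct

theorem stmt2_general {d : ℕ} (Δ : Set (EuclideanSpace ℝ (Fin d)))
    (hΔne : Δ.Nonempty) (hΔcomp : IsCompact Δ)
    (L : NNReal) (R : EuclideanSpace ℝ (Fin d) → ℝ)
    (hRlip : LipschitzOnWith L R Δ)
    (Rbar : EuclideanSpace ℝ (Fin d) → ℝ)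
    (hRbar : ∀ δ, Rbar δ =
      ⨅ δ' : Δ, (R δ' + (L : ℝ) * ‖δ - (δ' : EuclideanSpace ℝ (Fin d))‖))
    (η : ℝ) (hη : 0 < η)
    (lam γ δ : ℕ → EuclideanSpace ℝ (Fin d))
    (hγmem : ∀ t, γ t ∈ closedBall (δ t) (diam Δ))
    (hγmax : ∀ t, ∀ g ∈ closedBall (δ t) (diam Δ),
      ⟪lam t, g⟫ - Rbar g ≤ ⟪lam t, γ t⟫ - Rbar (γ t))
    (hrec : ∀ t, lam (t + 1) = lam t - η • (γ t - δ t))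
    (Λ : Set (EuclideanSpace ℝ (Fin d)))
    (hΛ : Λ = ⋃ δ' ∈ (⋃ δ'' ∈ Δ, closedBall δ'' (diam Δ)),
      {l : EuclideanSpace ℝ (Fin d) | ∀ y, Rbar δ' + ⟪l, y - δ'⟫ ≤ Rbar y}) :
    ∀ t, ‖lam t‖ ≤ (L : ℝ) + 2 * η * diam Δ +
      Metric.infDist (lam 0) (Λ + closedBall 0 (2 * η * diam Δ)) := by
  have hRbar_eq : Rbar = mcShaneExtension R Δ L :=
    funext fun y => by simp only [hRbar, mcShaneExtension, dist_eq_norm]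
  have hlip : LipschitzWith L Rbar := hRbar_eq ▸ hRlip.lipschitzWith_mcShaneExtension hΔne
  have hΛ_sub : Λ ⊆ closedBall 0 L := by
    simp only [hΛ, iUnion_subset_iff]
    exact fun _ _ l hl => mem_closedBall_zero_iff.2 (hlip.norm_le_of_forall_add_inner_le hl)
  obtain ⟨z, hzΔ, hzmin⟩ := hΔcomp.exists_isMinOn hΔne hRlip.continuousOn
  have hzΛ : 0 ∈ Λ := by
    rw [hΛ]
    refine mem_iUnion₂.2 ⟨z, mem_iUnion₂.2 ⟨z, hzΔ, mem_closedBall_self diam_nonneg⟩, fun y => ?_⟩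
    simpa [hRbar_eq] using hRlip.isMinOn_mcShaneExtension hzΔ hzmin (mem_univ y)
  have hηD : 0 ≤ 2 * η * diam Δ := by have := diam_nonneg (s := Δ); positivity
  have hS : Λ + closedBall 0 (2 * η * diam Δ) ⊆ closedBall 0 (L + 2 * η * diam Δ) := by
    simpa [closedBall_add_closedBall L.coe_nonneg hηD] using
      add_subset_add_right (t := closedBall 0 (2 * η * diam Δ)) hΛ_sub
  have hlam0 := dist_sub_le_infDist_of_subset_closedBall (x := lam 0)
    ⟨0 + 0, add_mem_add hzΛ (mem_closedBall_self hηD)⟩ hS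
  intro t
  refine (hlip.norm_le_max_of_forall_isMaxOn hη hγmem (fun t => isMaxOn_iff.2 (hγmax t)) hrec
    t).trans (max_le ?_ ?_)
  · rw [dist_zero_right] at hlam0
    linarith
  · linarith [infDist_nonneg (x := lam 0) (s := Λ + closedBall 0 (2 * η * diam Δ))]

/-- boundedness of the dual iterates, arbitrary initialization: for an
arbitrary `λ₀`, the dual gradient descent iterates satisfy, for all `t`,
`‖λ_t‖ ≤ L + 2η·diam(Δ) + dist(λ₀, Λ + B(0, 2η·diam(Δ)))`, where
`Λ = ∪_{δ ∈ Δ̄} ∂R̄(δ)` is the union of the subdifferentials of the extension `R̄`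
over `Δ̄ = ∪_{δ ∈ Δ} Δ_δ`. -/
theorem stmt2 {d : ℕ} (Δ : Set (EuclideanSpace ℝ (Fin d)))
    (hΔne : Δ.Nonempty) (hΔconv : Convex ℝ Δ) (hΔcomp : IsCompact Δ)
    (L : NNReal) (R : EuclideanSpace ℝ (Fin d) → ℝ)
    (hRconv : ConvexOn ℝ Δ R) (hRlip : LipschitzOnWith L R Δ)
    (Rbar : EuclideanSpace ℝ (Fin d) → ℝ)
    (hRbar : ∀ δ, Rbar δ =
      ⨅ δ' : Δ, (R δ' + (L : ℝ) * ‖δ - (δ' : EuclideanSpace ℝ (Fin d))‖))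
    (η : ℝ) (hη : 0 < η)
    (lam γ δ : ℕ → EuclideanSpace ℝ (Fin d))
    (hδ : ∀ t, δ t ∈ Δ)
    (hγmem : ∀ t, γ t ∈ closedBall (δ t) (diam Δ))
    (hγmax : ∀ t, ∀ g ∈ closedBall (δ t) (diam Δ),
      ⟪lam t, g⟫ - Rbar g ≤ ⟪lam t, γ t⟫ - Rbar (γ t))
    (hrec : ∀ t, lam (t + 1) = lam t - η • (γ t - δ t))
    (Λ : Set (EuclideanSpace ℝ (Fin d)))
    (hΛ : Λ = ⋃ δ' ∈ (⋃ δ'' ∈ Δ, closedBall δ'' (diam Δ)),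
      {l : EuclideanSpace ℝ (Fin d) | ∀ y, Rbar δ' + ⟪l, y - δ'⟫ ≤ Rbar y}) :
    ∀ t, ‖lam t‖ ≤ (L : ℝ) + 2 * η * diam Δ +
      Metric.infDist (lam 0) (Λ + closedBall 0 (2 * η * diam Δ)) :=
  stmt2_general Δ hΔne hΔcomp L R hRlip Rbar hRbar η hη lam γ δ hγmem hγmax hrec Λ hΛ
end

section
/- Let Δ ⊆ ℝ^d be a nonempty convex compact set, R : Δ → ℝ convex and L-Lipschitz for ‖·‖₂, and R̄(δ) = inf_{δ'∈Δ}{R(δ') + L‖δ−δ'‖₂}. Let η > 0 and λ₀ be a subgradient of R̄ at 0 (with 0 ∈ Δ). Given arbitrary sequences (δ_t)_{t≥1} in Δ and step sizes (η_t)_{t≥1} with 0 ≤ η_t ≤ η for all t, define recursively: γ_t is any maximizer of γ ↦ ⟨λ_t, γ⟩ − R̄(γ) over Δ_{δ_t}, and λ_{t+1} = λ_t − η_t(γ_t − δ_t). Then ‖λ_t‖₂ ≤ L + 2η·diam(Δ) for all t. -/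
/-!
Since `R̄` is `L`-Lipschitz, maximality of `γ_t` on the ball `B_t = closedBall δ_t D` gives
`⟪λ_t, g - γ_t⟫ ≤ L ‖g - γ_t‖` on `B_t`, and the subgradient inequality at `0` gives `‖λ₀‖ ≤ L`.
Testing the first inequality along the directions `u` with `⟪u, γ_t - δ_t⟫ ≤ 0` shows that either
`‖λ_t‖ ≤ L`, or `λ_t = p + μ (γ_t - δ_t)` with `p ⊥ γ_t - δ_t`, `‖p‖ ≤ L` and `μ > 0`. In the first
case a step moves `λ_t` by at most `η D`; in the second it only replaces `μ` by `μ - η_t`. Hence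
`‖λ_{t+1}‖ ≤ max ‖λ_t‖ (L + η D)`, and `‖λ_t‖ ≤ L + η D` for all `t`.
-/

open Filter Metric Set Topology
open scoped RealInnerProductSpace

theorem ciInf_add_mul_norm_sub_le {E ι : Type*} [SeminormedAddCommGroup E] [Nonempty ι]
    {f : ι → ℝ} (hf : BddBelow (range f)) (a : ι → E) {L : ℝ} (hL : 0 ≤ L) (x y : E) :
    ⨅ i, (f i + L * ‖x - a i‖) ≤ (⨅ i, (f i + L * ‖y - a i‖)) + L * ‖x - y‖ := by
  obtain ⟨m, hm⟩ := hf
  have hbdd : BddBelow (range fun i => f i + L * ‖x - a i‖) :=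
    ⟨m, forall_mem_range.2 fun i => by
      have := hm (mem_range_self i); nlinarith [norm_nonneg (x - a i)]⟩
  rw [← sub_le_iff_le_add]
  refine le_ciInf fun i => sub_le_iff_le_add.2 ?_
  calc ⨅ j, (f j + L * ‖x - a j‖) ≤ f i + L * ‖x - a i‖ := ciInf_le hbdd i
    _ ≤ f i + L * (‖x - y‖ + ‖y - a i‖) := by gcongr; exact norm_sub_le_norm_sub_add_norm_sub _ _ _
    _ = f i + L * ‖y - a i‖ + L * ‖x - y‖ := by ring

section ApproximateNormal

variable {E : Type*} [NormedAddCommGroup E] [InnerProductSpace ℝ E] {c γ l : E} {r L : ℝ}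

theorem inner_le_mul_norm_of_inner_neg (hγ : γ ∈ closedBall c r)
    (hl : ∀ g ∈ closedBall c r, ⟪l, g - γ⟫ ≤ L * ‖g - γ‖) {u : E} (hu : ⟪u, γ - c⟫ < 0) :
    ⟪l, u⟫ ≤ L * ‖u‖ := by
  have hu0 : u ≠ 0 := by rintro rfl; simp at hu
  -- `γ + ε • u` is the reflection of `γ` across the hyperplane through `c` orthogonal to `u`
  set ε := -2 * ⟪u, γ - c⟫ / ‖u‖ ^ 2 with hε_def
  have hε : 0 < ε := div_pos (by linarith) (by positivity)
  have hmem : γ + ε • u ∈ closedBall c r := by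
    have hsq : ‖γ - c + ε • u‖ ^ 2 = ‖γ - c‖ ^ 2 := by
      rw [norm_add_sq_real, real_inner_smul_right, norm_smul, Real.norm_of_nonneg hε.le,
        real_inner_comm, hε_def]
      field_simp
      ring
    rw [mem_closedBall_iff_norm, add_sub_right_comm,
      (sq_eq_sq₀ (norm_nonneg _) (norm_nonneg _)).1 hsq]
    exact mem_closedBall_iff_norm.1 hγ
  have := hl _ hmem
  rw [add_sub_cancel_left, real_inner_smul_right, norm_smul, Real.norm_of_nonneg hε.le,
    mul_left_comm] at this
  exact le_of_mul_le_mul_left this hε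

theorem inner_le_mul_norm_of_inner_nonpos (hγc : γ ≠ c) (hγ : γ ∈ closedBall c r)
    (hl : ∀ g ∈ closedBall c r, ⟪l, g - γ⟫ ≤ L * ‖g - γ‖) {u : E} (hu : ⟪u, γ - c⟫ ≤ 0) :
    ⟪l, u⟫ ≤ L * ‖u‖ := by
  have hv : 0 < ‖γ - c‖ := norm_pos_iff.2 (sub_ne_zero.2 hγc)
  have hlim : Tendsto (fun τ : ℝ => u - τ • (γ - c)) (𝓝[>] 0) (𝓝 u) :=
    ((continuous_const.sub (continuous_id.smul continuous_const)).tendsto' 0 u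
      (by simp)).mono_left nhdsWithin_le_nhds
  have hclosed : IsClosed {w : E | ⟪l, w⟫ ≤ L * ‖w‖} := isClosed_le (by fun_prop) (by fun_prop)
  refine hclosed.mem_of_tendsto hlim (eventually_nhdsWithin_of_forall fun τ (hτ : 0 < τ) => ?_)
  refine inner_le_mul_norm_of_inner_neg hγ hl ?_
  rw [inner_sub_left, real_inner_smul_left, real_inner_self_eq_norm_sq]
  nlinarith [mul_pos hτ (pow_pos hv 2)]

theorem norm_sub_smul_le_max (hL : 0 ≤ L) {s : ℝ} (hs : 0 ≤ s) (hγ : γ ∈ closedBall c r)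
    (hl : ∀ g ∈ closedBall c r, ⟪l, g - γ⟫ ≤ L * ‖g - γ‖) :
    ‖l - s • (γ - c)‖ ≤ max ‖l‖ (L + s * ‖γ - c‖) := by
  rcases le_or_gt ‖l‖ L with hlL | hlL
  · refine le_max_of_le_right ((norm_sub_le _ _).trans ?_)
    rw [norm_smul, Real.norm_of_nonneg hs]
    linarith
  rcases eq_or_ne γ c with rfl | hγc
  · simp
  have hcone {u : E} : ⟪u, γ - c⟫ ≤ 0 → ⟪l, u⟫ ≤ L * ‖u‖ :=
    inner_le_mul_norm_of_inner_nonpos hγc hγ hl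
  set v := γ - c
  have hv : 0 < ‖v‖ := norm_pos_iff.2 (sub_ne_zero.2 hγc)
  have ha : 0 < ⟪l, v⟫ := by
    by_contra! ha
    have := hcone ha
    rw [real_inner_self_eq_norm_sq] at this
    nlinarith
  set μ := ⟪l, v⟫ / ‖v‖ ^ 2
  have hμ : 0 ≤ μ := by positivity
  set p := l - μ • v
  have hpv : ⟪p, v⟫ = 0 := by
    simp only [p, μ, inner_sub_left, real_inner_smul_left, real_inner_self_eq_norm_sq]
    field_simp
    ring
  have hl_eq : l = p + μ • v := by simp [p]
  have hp : ‖p‖ ≤ L := by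
    have hlp : ⟪l, p⟫ = ‖p‖ ^ 2 := by
      rw [hl_eq, inner_add_left, real_inner_smul_left, real_inner_comm p v, hpv, mul_zero, add_zero,
        real_inner_self_eq_norm_sq]
    have := hcone hpv.le
    rw [hlp] at this
    nlinarith [norm_nonneg p]
  have hpyth (t : ℝ) : ‖p + t • v‖ ^ 2 = ‖p‖ ^ 2 + t ^ 2 * ‖v‖ ^ 2 := by
    rw [sq, norm_add_sq_eq_norm_sq_add_norm_sq_real (by rw [real_inner_smul_right, hpv, mul_zero]),
      norm_smul, Real.norm_eq_abs, mul_mul_mul_comm, abs_mul_abs_self]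
    ring
  rw [show l - s • v = p + (μ - s) • v by rw [sub_smul, hl_eq]; abel]
  rcases le_or_gt s (2 * μ) with hsμ | hsμ
  · refine le_max_of_le_left ((sq_le_sq₀ (norm_nonneg _) (norm_nonneg _)).1 ?_)
    have hμs : (μ - s) ^ 2 ≤ μ ^ 2 := by nlinarith
    rw [hl_eq, hpyth, hpyth]
    gcongr _ + ?_ * _
  · refine le_max_of_le_right ((sq_le_sq₀ (norm_nonneg _) (by positivity)).1 ?_)
    have hμs : (μ - s) ^ 2 ≤ s ^ 2 := by nlinarith
    have hp2 : ‖p‖ ^ 2 ≤ L ^ 2 := pow_le_pow_left₀ (norm_nonneg p) hp 2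
    rw [hpyth]
    nlinarith [mul_le_mul_of_nonneg_right hμs (sq_nonneg ‖v‖), mul_nonneg hL (mul_nonneg hs hv.le)]

end ApproximateNormal

theorem stmt4_general {d : ℕ} (Δ : Set (EuclideanSpace ℝ (Fin d)))
    (hΔne : Δ.Nonempty) (hΔcomp : IsCompact Δ)
    (L : NNReal) (R : EuclideanSpace ℝ (Fin d) → ℝ)
    (hRlip : LipschitzOnWith L R Δ)
    (Rbar : EuclideanSpace ℝ (Fin d) → ℝ)
    (hRbar : ∀ δ, Rbar δ =
      ⨅ δ' : Δ, (R δ' + (L : ℝ) * ‖δ - (δ' : EuclideanSpace ℝ (Fin d))‖))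
    (η : ℝ)
    (ηt : ℕ → ℝ) (hηt : ∀ t, 0 ≤ ηt t ∧ ηt t ≤ η)
    (lam γ δ : ℕ → EuclideanSpace ℝ (Fin d))
    (hlam0 : ∀ y, Rbar 0 + ⟪lam 0, y - 0⟫ ≤ Rbar y)
    (hγmem : ∀ t, γ t ∈ closedBall (δ t) (diam Δ))
    (hγmax : ∀ t, ∀ g ∈ closedBall (δ t) (diam Δ),
      ⟪lam t, g⟫ - Rbar g ≤ ⟪lam t, γ t⟫ - Rbar (γ t))
    (hrec : ∀ t, lam (t + 1) = lam t - ηt t • (γ t - δ t)) :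
    ∀ t, ‖lam t‖ ≤ (L : ℝ) + 2 * η * diam Δ := by
  have hL : (0 : ℝ) ≤ L := L.coe_nonneg
  have hη : 0 ≤ η := (hηt 0).1.trans (hηt 0).2
  have hηD : 0 ≤ η * diam Δ := mul_nonneg hη diam_nonneg
  have : Nonempty Δ := hΔne.to_subtype
  have hRbdd : BddBelow (range fun δ' : Δ => R δ') :=
    (hΔcomp.bddBelow_image hRlip.continuousOn).mono <|
      range_subset_iff.2 fun δ' => mem_image_of_mem R δ'.2
  have hRbar_le (x y) : Rbar x ≤ Rbar y + L * ‖x - y‖ := by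
    simpa only [hRbar] using
      ciInf_add_mul_norm_sub_le hRbdd ((↑) : Δ → EuclideanSpace ℝ (Fin d)) hL x y
  have hlam0_le : ‖lam 0‖ ≤ L := by
    have hsub := hlam0 (lam 0)
    have hlip := hRbar_le (lam 0) 0
    rw [sub_zero, real_inner_self_eq_norm_sq] at hsub
    rw [sub_zero] at hlip
    nlinarith [norm_nonneg (lam 0)]
  have hnormal (t) : ∀ g ∈ closedBall (δ t) (diam Δ), ⟪lam t, g - γ t⟫ ≤ L * ‖g - γ t‖ :=
    fun g hg => by
      rw [inner_sub_right]
      linarith [hγmax t g hg, hRbar_le g (γ t)]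
  have hbound (t) : ‖lam t‖ ≤ L + η * diam Δ := by
    induction t with
    | zero => linarith
    | succ t ih =>
      rw [hrec t]
      refine (norm_sub_smul_le_max hL (hηt t).1 (hγmem t) (hnormal t)).trans (max_le ih ?_)
      gcongr
      · exact (hηt t).2
      · exact mem_closedBall_iff_norm.1 (hγmem t)
  intro t
  linarith [hbound t]

/-- boundedness of the dual iterates with time-varying step sizes:
with `λ₀` a subgradient of the extension `R̄` at `0 ∈ Δ` and step sizes
`0 ≤ η_t ≤ η`, the iterates `λ_{t+1} = λ_t − η_t(γ_t − δ_t)` satisfy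
`‖λ_t‖ ≤ L + 2η·diam(Δ)` for all `t`. -/
theorem stmt4 {d : ℕ} (Δ : Set (EuclideanSpace ℝ (Fin d)))
    (hΔne : Δ.Nonempty) (hΔconv : Convex ℝ Δ) (hΔcomp : IsCompact Δ)
    (h0Δ : (0 : EuclideanSpace ℝ (Fin d)) ∈ Δ)
    (L : NNReal) (R : EuclideanSpace ℝ (Fin d) → ℝ)
    (hRconv : ConvexOn ℝ Δ R) (hRlip : LipschitzOnWith L R Δ)
    (Rbar : EuclideanSpace ℝ (Fin d) → ℝ)
    (hRbar : ∀ δ, Rbar δ =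
      ⨅ δ' : Δ, (R δ' + (L : ℝ) * ‖δ - (δ' : EuclideanSpace ℝ (Fin d))‖))
    (η : ℝ) (hη : 0 < η)
    (ηt : ℕ → ℝ) (hηt : ∀ t, 0 ≤ ηt t ∧ ηt t ≤ η)
    (lam γ δ : ℕ → EuclideanSpace ℝ (Fin d))
    (hδ : ∀ t, δ t ∈ Δ)
    (hlam0 : ∀ y, Rbar 0 + ⟪lam 0, y - 0⟫ ≤ Rbar y)
    (hγmem : ∀ t, γ t ∈ closedBall (δ t) (diam Δ))
    (hγmax : ∀ t, ∀ g ∈ closedBall (δ t) (diam Δ),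
      ⟪lam t, g⟫ - Rbar g ≤ ⟪lam t, γ t⟫ - Rbar (γ t))
    (hrec : ∀ t, lam (t + 1) = lam t - ηt t • (γ t - δ t)) :
    ∀ t, ‖lam t‖ ≤ (L : ℝ) + 2 * η * diam Δ :=
  stmt4_general Δ hΔne hΔcomp L R hRlip Rbar hRbar η ηt hηt lam γ δ hlam0 hγmem hγmax hrec
end

section
/- Let (Ω, F, P) be a probability space with a filtration (F_t)_{t=0,…,T}. For each t ∈ {1,…,T} let a_t : Ω → ℝ^d be an F_t-measurable random vector with ‖a_t‖₂ ≤ 1 almost surely, and let δ_t be an F_{t−1}-measurable version of the conditional expectation E[a_t | F_{t−1}]. Let R : ℝ^d → ℝ be L-Lipschitz for the Euclidean norm. Then |E[R((1/T)Σ_{t=1}^T a_t) − R((1/T)Σ_{t=1}^T δ_t)]| ≤ 2L√(d/T). -/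
/-!
The increments `g t = a t - δ t` form a martingale difference sequence bounded by `2`. By the
pull-out property, `E⟪g s, g t⟫ = E⟪g s, E[g t | ℱ (t - 1)]⟫ = 0` for `s < t`, so the increments
are orthogonal in `L²` and `E‖∑ g t‖² = ∑ E‖g t‖² ≤ 4T`. Jensen gives `E‖∑ g t‖ ≤ 2√T`, and the
Lipschitz bound on `R` turns this into `2L/√T`, which is at most `2L√(d/T)` once `d ≥ 1`.
-/

open MeasureTheory Finset
open scoped NNReal RealInnerProductSpace

section

variable {Ω : Type*} {m m0 : MeasurableSpace Ω} {μ : Measure Ω}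

theorem integral_le_sqrt_integral_sq [IsProbabilityMeasure μ] {f : Ω → ℝ}
    (hf : Integrable f μ) (hf2 : Integrable (fun ω => f ω ^ 2) μ) :
    ∫ ω, f ω ∂μ ≤ √(∫ ω, f ω ^ 2 ∂μ) :=
  (le_abs_self _).trans <| Real.abs_le_sqrt <|
    (even_two.convexOn_pow (𝕜 := ℝ)).map_integral_le (continuous_pow 2).continuousOn
      isClosed_univ (ae_of_all _ fun _ => Set.mem_univ _) hf hf2

theorem ae_norm_condExp_le {E : Type*} [NormedAddCommGroup E] [NormedSpace ℝ E]
    [CompleteSpace E] {f : Ω → E} {C : ℝ} (hf : ∀ᵐ ω ∂μ, ‖f ω‖ ≤ C) :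
    ∀ᵐ ω ∂μ, ‖μ[f | m] ω‖ ≤ C := by
  have hnorm : ∀ᵐ ω ∂μ, |‖f ω‖| ≤ C := by simpa only [abs_norm] using hf
  filter_upwards [norm_condExp_le (m := m) f, ae_bdd_abs_condExp_of_ae_bdd_abs hnorm]
    with ω h_jensen h_bdd
  exact h_jensen.trans ((le_abs_self _).trans h_bdd)

theorem abs_integral_sub_le_of_lipschitzWith {F : Type*} [NormedAddCommGroup F]
    {R : F → ℝ} {L : ℝ≥0} (hR : LipschitzWith L R) {X Y : Ω → F}
    (hXY : Integrable (fun ω => X ω - Y ω) μ) :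
    |∫ ω, (R (X ω) - R (Y ω)) ∂μ| ≤ L * ∫ ω, ‖X ω - Y ω‖ ∂μ := by
  rw [← integral_const_mul, ← Real.norm_eq_abs]
  refine norm_integral_le_of_norm_le (hXY.norm.const_mul _) (ae_of_all _ fun ω => ?_)
  simpa only [Real.dist_eq, dist_eq_norm, Real.norm_eq_abs] using hR.dist_le_mul (X ω) (Y ω)

end

section MartingaleDifference

variable {Ω E : Type*} {m m0 : MeasurableSpace Ω} {μ : Measure Ω}
  [NormedAddCommGroup E] [InnerProductSpace ℝ E] [CompleteSpace E]

theorem integral_inner_eq_zero_of_condExp_eq_zero (hm : m ≤ m0) [SigmaFinite (μ.trim hm)]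
    {f g : Ω → E} (hf : StronglyMeasurable[m] f) (hfg : Integrable (fun ω => ⟪f ω, g ω⟫) μ)
    (hg : Integrable g μ) (hg0 : μ[g | m] =ᵐ[μ] 0) :
    ∫ ω, ⟪f ω, g ω⟫ ∂μ = 0 := by
  have hpull := condExp_bilin_of_stronglyMeasurable_left (innerSL ℝ) hf hfg hg
  calc ∫ ω, ⟪f ω, g ω⟫ ∂μ = ∫ ω, μ[fun ω => ⟪f ω, g ω⟫ | m] ω ∂μ :=
        (integral_condExp hm).symm
    _ = ∫ _, (0 : ℝ) ∂μ := by
        refine integral_congr_ae ?_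
        filter_upwards [hpull, hg0] with ω h_pull h_zero
        exact h_pull.trans (by simp [h_zero])
    _ = 0 := integral_zero _ _

variable [IsFiniteMeasure μ] (ℱ : Filtration ℕ m0) {g : ℕ → Ω → E} {s : Finset ℕ} {C : ℝ}

theorem integral_norm_sum_sq_of_condExp_eq_zero
    (hg_meas : ∀ t ∈ s, StronglyMeasurable[ℱ t] (g t))
    (hg_bdd : ∀ t ∈ s, ∀ᵐ ω ∂μ, ‖g t ω‖ ≤ C)
    (hg0 : ∀ t ∈ s, μ[g t | ℱ (t - 1)] =ᵐ[μ] 0) :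
    ∫ ω, ‖∑ t ∈ s, g t ω‖ ^ 2 ∂μ = ∑ t ∈ s, ∫ ω, ‖g t ω‖ ^ 2 ∂μ := by
  have hg_aesm : ∀ t ∈ s, AEStronglyMeasurable (g t) μ := fun t ht =>
    ((hg_meas t ht).mono (ℱ.le t)).aestronglyMeasurable
  have hinner_int : ∀ u ∈ s, ∀ v ∈ s, Integrable (fun ω => ⟪g u ω, g v ω⟫) μ := by
    intro u hu v hv
    refine .of_bound ((hg_aesm u hu).inner (hg_aesm v hv)) (C * C) ?_
    filter_upwards [hg_bdd u hu, hg_bdd v hv] with ω h_u h_v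
    exact (norm_inner_le_norm _ _).trans
      (mul_le_mul h_u h_v (norm_nonneg _) ((norm_nonneg _).trans h_u))
  have hcross : ∀ u ∈ s, ∀ v ∈ s, u < v → ∫ ω, ⟪g u ω, g v ω⟫ ∂μ = 0 := by
    intro u hu v hv huv
    exact integral_inner_eq_zero_of_condExp_eq_zero (ℱ.le (v - 1))
      ((hg_meas u hu).mono (ℱ.mono (by omega))) (hinner_int u hu v hv)
      (.of_bound (hg_aesm v hv) C (hg_bdd v hv)) (hg0 v hv)
  have hoff_diag : ∀ u ∈ s, ∀ v ∈ s, v ≠ u → ∫ ω, ⟪g u ω, g v ω⟫ ∂μ = 0 := by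
    intro u hu v hv hvu
    rcases hvu.lt_or_gt with hvu | huv
    · rw [← hcross v hv u hu hvu]
      exact integral_congr_ae (ae_of_all _ fun ω => real_inner_comm _ _)
    · exact hcross u hu v hv huv
  calc ∫ ω, ‖∑ t ∈ s, g t ω‖ ^ 2 ∂μ = ∫ ω, ∑ u ∈ s, ∑ v ∈ s, ⟪g u ω, g v ω⟫ ∂μ := by
        simp_rw [← real_inner_self_eq_norm_sq, sum_inner, inner_sum]
    _ = ∑ u ∈ s, ∑ v ∈ s, ∫ ω, ⟪g u ω, g v ω⟫ ∂μ := by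
        rw [integral_finsetSum _ fun u hu => integrable_finsetSum _ (hinner_int u hu)]
        exact sum_congr rfl fun u hu => integral_finsetSum _ (hinner_int u hu)
    _ = ∑ u ∈ s, ∫ ω, ⟪g u ω, g u ω⟫ ∂μ :=
        sum_congr rfl fun u hu => sum_eq_single_of_mem u hu (hoff_diag u hu)
    _ = ∑ t ∈ s, ∫ ω, ‖g t ω‖ ^ 2 ∂μ := by simp_rw [real_inner_self_eq_norm_sq]

end MartingaleDifference

section ProbabilityMeasure

variable {Ω E : Type*} {m0 : MeasurableSpace Ω} {μ : Measure Ω} [IsProbabilityMeasure μ]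
  [NormedAddCommGroup E] [InnerProductSpace ℝ E] [CompleteSpace E]
  (ℱ : Filtration ℕ m0) {s : Finset ℕ} {C : ℝ} {a δ : ℕ → Ω → E}

theorem integral_norm_sum_le_of_condExp_eq_zero {g : ℕ → Ω → E} (hC : 0 ≤ C)
    (hg_meas : ∀ t ∈ s, StronglyMeasurable[ℱ t] (g t))
    (hg_bdd : ∀ t ∈ s, ∀ᵐ ω ∂μ, ‖g t ω‖ ≤ C)
    (hg0 : ∀ t ∈ s, μ[g t | ℱ (t - 1)] =ᵐ[μ] 0) :
    ∫ ω, ‖∑ t ∈ s, g t ω‖ ∂μ ≤ C * √(#s : ℝ) := by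
  have hS_bdd : ∀ᵐ ω ∂μ, ‖∑ t ∈ s, g t ω‖ ≤ #s * C := by
    filter_upwards [(ae_ball_iff s.countable_toSet).2 hg_bdd] with ω hω
    exact (norm_sum_le _ _).trans (by simpa using sum_le_sum hω)
  have hS_memLp : MemLp (fun ω => ‖∑ t ∈ s, g t ω‖) 2 μ := by
    refine .of_bound ?_ (#s * C) (by simpa using hS_bdd)
    exact (Finset.stronglyMeasurable_fun_sum s fun t ht =>
      (hg_meas t ht).mono (ℱ.le t)).norm.aestronglyMeasurable
  have hsq_bdd : ∀ t ∈ s, ∫ ω, ‖g t ω‖ ^ 2 ∂μ ≤ C ^ 2 := fun t ht => by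
    have h := norm_integral_le_of_norm_le_const (μ := μ) (f := fun ω => ‖g t ω‖ ^ 2) (C := C ^ 2)
      (by filter_upwards [hg_bdd t ht] with ω hω
          simpa using pow_le_pow_left₀ (norm_nonneg _) hω 2)
    simpa using (Real.le_norm_self _).trans h
  have hsecond_moment : ∫ ω, ‖∑ t ∈ s, g t ω‖ ^ 2 ∂μ ≤ #s * C ^ 2 := by
    rw [integral_norm_sum_sq_of_condExp_eq_zero ℱ hg_meas hg_bdd hg0]
    simpa using sum_le_sum hsq_bdd
  calc ∫ ω, ‖∑ t ∈ s, g t ω‖ ∂μ ≤ √(∫ ω, ‖∑ t ∈ s, g t ω‖ ^ 2 ∂μ) :=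
        integral_le_sqrt_integral_sq (hS_memLp.integrable one_le_two)
          hS_memLp.integrable_sq
    _ ≤ √(#s * C ^ 2) := Real.sqrt_le_sqrt hsecond_moment
    _ = C * √(#s : ℝ) := by rw [Real.sqrt_mul (by positivity), Real.sqrt_sq hC, mul_comm]

theorem integral_norm_sum_sub_condExp_le (hC : 0 ≤ C)
    (ha_meas : ∀ t ∈ s, StronglyMeasurable[ℱ t] (a t))
    (ha_bdd : ∀ t ∈ s, ∀ᵐ ω ∂μ, ‖a t ω‖ ≤ C)
    (hδ_meas : ∀ t ∈ s, StronglyMeasurable[ℱ (t - 1)] (δ t))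
    (hδ : ∀ t ∈ s, δ t =ᵐ[μ] μ[a t | ℱ (t - 1)]) :
    ∫ ω, ‖∑ t ∈ s, (a t ω - δ t ω)‖ ∂μ ≤ 2 * C * √(#s : ℝ) := by
  have hδ_bdd : ∀ t ∈ s, ∀ᵐ ω ∂μ, ‖δ t ω‖ ≤ C := fun t ht => by
    filter_upwards [hδ t ht, ae_norm_condExp_le (ha_bdd t ht)] with ω h_eq h_le
    rwa [h_eq]
  refine integral_norm_sum_le_of_condExp_eq_zero ℱ (g := fun t => a t - δ t) (by positivity)
    (fun t ht => ?_) (fun t ht => ?_) (fun t ht => ?_)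
  · exact (ha_meas t ht).sub ((hδ_meas t ht).mono (ℱ.mono (Nat.sub_le t 1)))
  · filter_upwards [ha_bdd t ht, hδ_bdd t ht] with ω h_a h_δ
    exact (norm_sub_le _ _).trans (by linarith)
  · have ha_int : Integrable (a t) μ :=
      .of_bound ((ha_meas t ht).mono (ℱ.le t)).aestronglyMeasurable C (ha_bdd t ht)
    have hδ_int : Integrable (δ t) μ := integrable_condExp.congr (hδ t ht).symm
    filter_upwards [condExp_sub ha_int hδ_int (ℱ (t - 1)), hδ t ht] with ω h_sub h_δ
    rw [h_sub, Pi.sub_apply, condExp_of_stronglyMeasurable (ℱ.le _) (hδ_meas t ht) hδ_int,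
      ← h_δ, sub_self, Pi.zero_apply]

theorem abs_integral_lipschitz_average_sub_le (hC : 0 ≤ C)
    (ha_meas : ∀ t ∈ s, StronglyMeasurable[ℱ t] (a t))
    (ha_bdd : ∀ t ∈ s, ∀ᵐ ω ∂μ, ‖a t ω‖ ≤ C)
    (hδ_meas : ∀ t ∈ s, StronglyMeasurable[ℱ (t - 1)] (δ t))
    (hδ : ∀ t ∈ s, δ t =ᵐ[μ] μ[a t | ℱ (t - 1)])
    {L : ℝ≥0} {R : E → ℝ} (hR : LipschitzWith L R) :
    |∫ ω, (R ((#s : ℝ)⁻¹ • ∑ t ∈ s, a t ω) - R ((#s : ℝ)⁻¹ • ∑ t ∈ s, δ t ω)) ∂μ|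
      ≤ 2 * C * L / √(#s : ℝ) := by
  have hdiff : ∀ ω, (#s : ℝ)⁻¹ • ∑ t ∈ s, a t ω - (#s : ℝ)⁻¹ • ∑ t ∈ s, δ t ω
      = (#s : ℝ)⁻¹ • ∑ t ∈ s, (a t ω - δ t ω) := fun ω => by
    rw [sum_sub_distrib, smul_sub]
  have hsum_int : Integrable (fun ω => ∑ t ∈ s, (a t ω - δ t ω)) μ :=
    integrable_finsetSum s fun t ht =>
      (Integrable.of_bound ((ha_meas t ht).mono (ℱ.le t)).aestronglyMeasurable C
        (ha_bdd t ht)).sub (integrable_condExp.congr (hδ t ht).symm)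
  calc _ ≤ L * ∫ ω, ‖(#s : ℝ)⁻¹ • ∑ t ∈ s, a t ω - (#s : ℝ)⁻¹ • ∑ t ∈ s, δ t ω‖ ∂μ := by
        refine abs_integral_sub_le_of_lipschitzWith hR ?_
        simp_rw [hdiff]
        exact hsum_int.smul (#s : ℝ)⁻¹
    _ = L * ((#s : ℝ)⁻¹ * ∫ ω, ‖∑ t ∈ s, (a t ω - δ t ω)‖ ∂μ) := by
        simp_rw [hdiff, norm_smul, integral_const_mul, norm_inv, Real.norm_natCast]
    _ ≤ L * ((#s : ℝ)⁻¹ * (2 * C * √(#s : ℝ))) := by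
        gcongr
        exact integral_norm_sum_sub_condExp_le ℱ hC ha_meas ha_bdd hδ_meas hδ
    _ = 2 * C * L / √(#s : ℝ) := by
        rw [div_eq_mul_inv, ← Real.sqrt_div_self]
        ring

end ProbabilityMeasure

theorem stmt5_general {d : ℕ} {Ω : Type*} {m0 : MeasurableSpace Ω}
    (P : Measure Ω) [IsProbabilityMeasure P]
    (ℱ : Filtration ℕ m0) (T : ℕ)
    (a δ : ℕ → Ω → EuclideanSpace ℝ (Fin d))
    (ha_meas : ∀ t ∈ Finset.Icc 1 T, StronglyMeasurable[ℱ t] (a t))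
    (ha_bdd : ∀ t ∈ Finset.Icc 1 T, ∀ᵐ ω ∂P, ‖a t ω‖ ≤ 1)
    (hδ_meas : ∀ t ∈ Finset.Icc 1 T, StronglyMeasurable[ℱ (t - 1)] (δ t))
    (hδ_ver : ∀ t ∈ Finset.Icc 1 T, δ t =ᵐ[P] P[a t | ℱ (t - 1)])
    (L : NNReal) (R : EuclideanSpace ℝ (Fin d) → ℝ) (hR : LipschitzWith L R) :
    |∫ ω, (R ((T : ℝ)⁻¹ • ∑ t ∈ Finset.Icc 1 T, a t ω)
         - R ((T : ℝ)⁻¹ • ∑ t ∈ Finset.Icc 1 T, δ t ω)) ∂P|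
      ≤ 2 * (L : ℝ) * Real.sqrt ((d : ℝ) / (T : ℝ)) := by
  rcases Nat.eq_zero_or_pos d with rfl | hd
  · simp [Subsingleton.elim (α := EuclideanSpace ℝ (Fin 0)) _ 0]
  have h := abs_integral_lipschitz_average_sub_le ℱ zero_le_one ha_meas ha_bdd hδ_meas hδ_ver hR
  rw [Nat.card_Icc, Nat.add_sub_cancel] at h
  have hd_sqrt : 1 ≤ √(d : ℝ) := Real.one_le_sqrt.mpr (by exact_mod_cast hd)
  calc _ ≤ 2 * 1 * L / √(T : ℝ) := h
    _ ≤ 2 * L * (√(d : ℝ) / √(T : ℝ)) := by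
        rw [show 2 * 1 * (L : ℝ) / √(T : ℝ) = 2 * L * (1 / √(T : ℝ)) by ring]
        gcongr
    _ = 2 * L * √((d : ℝ) / T) := by rw [Real.sqrt_div' _ (Nat.cast_nonneg T)]

/-- Lemma 2 of the paper: if `a_t` is `F_t`-measurable with `‖a_t‖ ≤ 1`
a.s. and `δ_t` is an `F_{t−1}`-measurable version of `E[a_t | F_{t−1}]`, then for any
`L`-Lipschitz `R`,
`|E[R((1/T)Σ a_t) − R((1/T)Σ δ_t)]| ≤ 2L√(d/T)`. -/
theorem stmt5 {d : ℕ} {Ω : Type*} {m0 : MeasurableSpace Ω}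
    (P : Measure Ω) [IsProbabilityMeasure P]
    (ℱ : Filtration ℕ m0) (T : ℕ) (hT : 0 < T)
    (a δ : ℕ → Ω → EuclideanSpace ℝ (Fin d))
    (ha_meas : ∀ t ∈ Finset.Icc 1 T, StronglyMeasurable[ℱ t] (a t))
    (ha_bdd : ∀ t ∈ Finset.Icc 1 T, ∀ᵐ ω ∂P, ‖a t ω‖ ≤ 1)
    (hδ_meas : ∀ t ∈ Finset.Icc 1 T, StronglyMeasurable[ℱ (t - 1)] (δ t))
    (hδ_ver : ∀ t ∈ Finset.Icc 1 T, δ t =ᵐ[P] P[a t | ℱ (t - 1)])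
    (L : NNReal) (R : EuclideanSpace ℝ (Fin d) → ℝ) (hR : LipschitzWith L R) :
    |∫ ω, (R ((T : ℝ)⁻¹ • ∑ t ∈ Finset.Icc 1 T, a t ω)
         - R ((T : ℝ)⁻¹ • ∑ t ∈ Finset.Icc 1 T, δ t ω)) ∂P|
      ≤ 2 * (L : ℝ) * Real.sqrt ((d : ℝ) / (T : ℝ)) :=
  stmt5_general P ℱ T a δ ha_meas ha_bdd hδ_meas hδ_ver L R hR
end

section
/- Define D₁ : ℝ → ℝ by D₁(λ) = (1/4)·max(1−λ, 0) + (3/4)·max((λ−1)/3, 0) + max(|λ|−5, 0), and D₂(λ) = D₁(−λ). Then: (i) inf_{λ∈ℝ} D₁(λ) = 0 and inf_{λ∈ℝ} D₂(λ) = 0; (ii) sup_{π∈[0,1]} inf_{λ∈ℝ} (π·D₁(λ) + (1−π)·D₂(λ)) = 1/4, the supremum being attained at π = 1/2. In particular, the optimal randomized-mixture dual value 1/4 is strictly larger than the best single-source dual value 0. -/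
/-- the two-source example: with
`D₁(λ) = (1/4)·max(1−λ,0) + (3/4)·max((λ−1)/3,0) + max(|λ|−5,0)` and `D₂(λ) = D₁(−λ)`,
each single-source dual value is `inf D₁ = inf D₂ = 0`, whereas the randomized-mixture
dual value is `sup_{π∈[0,1]} inf_λ (π·D₁(λ) + (1−π)·D₂(λ)) = 1/4`, attained at
`π = 1/2`. -/
theorem stmt13 (D₁ D₂ : ℝ → ℝ)
    (hD₁ : ∀ lam, D₁ lam =
      (1 / 4) * max (1 - lam) 0 + (3 / 4) * max ((lam - 1) / 3) 0 + max (|lam| - 5) 0)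
    (hD₂ : ∀ lam, D₂ lam = D₁ (-lam)) :
    (⨅ lam : ℝ, D₁ lam) = 0 ∧
    (⨅ lam : ℝ, D₂ lam) = 0 ∧
    (⨆ π : Set.Icc (0 : ℝ) 1,
      ⨅ lam : ℝ, ((π : ℝ) * D₁ lam + (1 - (π : ℝ)) * D₂ lam)) = 1 / 4 ∧
    (⨅ lam : ℝ, ((1 / 2 : ℝ) * D₁ lam + (1 / 2) * D₂ lam)) = 1 / 4 := by
  have h1nn : ∀ lam, 0 ≤ D₁ lam := by
    intro lam
    rw [hD₁]
    have a := le_max_right (1 - lam) (0:ℝ)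
    have b := le_max_right ((lam - 1) / 3) (0:ℝ)
    have c := le_max_right (|lam| - 5) (0:ℝ)
    linarith
  have h2nn : ∀ lam, 0 ≤ D₂ lam := by
    intro lam; rw [hD₂]; exact h1nn _
  have hD1_1 : D₁ 1 = 0 := by
    rw [hD₁]; norm_num
  have hD2_1 : D₂ (-1) = 0 := by
    rw [hD₂]; norm_num [hD1_1]
  have hD1_0 : D₁ 0 = 1/4 := by
    rw [hD₁]; norm_num
  have hD2_0 : D₂ 0 = 1/4 := by
    rw [hD₂]; norm_num [hD1_0]
  have hi1 : (⨅ lam : ℝ, D₁ lam) = 0 := by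
    apply le_antisymm
    · calc (⨅ lam : ℝ, D₁ lam) ≤ D₁ 1 := ciInf_le ⟨0, by rintro x ⟨l, rfl⟩; exact h1nn l⟩ 1
        _ = 0 := hD1_1
    · exact le_ciInf h1nn
  have hi2 : (⨅ lam : ℝ, D₂ lam) = 0 := by
    apply le_antisymm
    · calc (⨅ lam : ℝ, D₂ lam) ≤ D₂ (-1) := ciInf_le ⟨0, by rintro x ⟨l, rfl⟩; exact h2nn l⟩ (-1)
        _ = 0 := hD2_1
    · exact le_ciInf h2nn
  -- lower bound for the half-half mixture
  have hf : ∀ lam : ℝ, (1/4 : ℝ) ≤ (1/2 : ℝ) * D₁ lam + (1/2) * D₂ lam := by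
    intro lam
    rw [hD₂, hD₁, hD₁]
    have A := le_max_left (1 - lam) (0:ℝ)
    have A0 := le_max_right (1 - lam) (0:ℝ)
    have B := le_max_left ((lam - 1) / 3) (0:ℝ)
    have B0 := le_max_right ((lam - 1) / 3) (0:ℝ)
    have A' := le_max_left (1 - (-lam)) (0:ℝ)
    have A0' := le_max_right (1 - (-lam)) (0:ℝ)
    have B' := le_max_left ((-lam - 1) / 3) (0:ℝ)
    have B0' := le_max_right ((-lam - 1) / 3) (0:ℝ)
    have C0 := le_max_right (|lam| - 5) (0:ℝ)
    have C0' := le_max_right (|(-lam)| - 5) (0:ℝ)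
    rcases le_total lam (-1) with h | h
    · linarith
    · rcases le_total lam 1 with h' | h'
      · linarith
      · linarith
  have hi4 : (⨅ lam : ℝ, ((1 / 2 : ℝ) * D₁ lam + (1 / 2) * D₂ lam)) = 1 / 4 := by
    apply le_antisymm
    · calc (⨅ lam : ℝ, ((1 / 2 : ℝ) * D₁ lam + (1 / 2) * D₂ lam))
          ≤ (1 / 2 : ℝ) * D₁ 0 + (1 / 2) * D₂ 0 :=
            ciInf_le ⟨1/4, by rintro x ⟨l, rfl⟩; exact hf l⟩ 0
        _ = 1/4 := by rw [hD1_0, hD2_0]; norm_num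
    · exact le_ciInf hf
  refine ⟨hi1, hi2, ?_, hi4⟩
  -- the supremum over π
  have hub : ∀ π : Set.Icc (0:ℝ) 1,
      (⨅ lam : ℝ, ((π : ℝ) * D₁ lam + (1 - (π : ℝ)) * D₂ lam)) ≤ 1/4 := by
    intro π
    have hπ0 : (0:ℝ) ≤ (π : ℝ) := π.2.1
    have hπ1 : (π : ℝ) ≤ 1 := π.2.2
    have hbdd : BddBelow (Set.range fun lam : ℝ =>
        ((π : ℝ) * D₁ lam + (1 - (π : ℝ)) * D₂ lam)) := by
      refine ⟨0, ?_⟩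
      rintro x ⟨l, rfl⟩
      show (0:ℝ) ≤ (π : ℝ) * D₁ l + (1 - (π : ℝ)) * D₂ l
      nlinarith [h1nn l, h2nn l]
    calc (⨅ lam : ℝ, ((π : ℝ) * D₁ lam + (1 - (π : ℝ)) * D₂ lam))
        ≤ (π : ℝ) * D₁ 0 + (1 - (π : ℝ)) * D₂ 0 := ciInf_le hbdd 0
      _ = 1/4 := by rw [hD1_0, hD2_0]; ring
  apply le_antisymm
  · exact ciSup_le hub
  · have hbddA : BddAbove (Set.range fun π : Set.Icc (0:ℝ) 1 =>
        (⨅ lam : ℝ, ((π : ℝ) * D₁ lam + (1 - (π : ℝ)) * D₂ lam))) := by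
      refine ⟨1/4, ?_⟩
      rintro x ⟨π, rfl⟩
      exact hub π
    have hmem : (1/2 : ℝ) ∈ Set.Icc (0:ℝ) 1 := by norm_num
    have := le_ciSup hbddA (⟨1/2, hmem⟩ : Set.Icc (0:ℝ) 1)
    have heq : (⨅ lam : ℝ, (((⟨1/2, hmem⟩ : Set.Icc (0:ℝ) 1) : ℝ) * D₁ lam +
        (1 - ((⟨1/2, hmem⟩ : Set.Icc (0:ℝ) 1) : ℝ)) * D₂ lam)) = 1/4 := by
      rw [← hi4]
      congr 1
      funext lam
      norm_num
    rw [heq] at this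
    exact this
end

section
/- Let (Ω, F, P) be a probability space, G ⊆ F a sub-σ-algebra, K ∈ ℕ, k : Ω → {1,…,K} a random variable, and φ : Ω → ℝ a bounded random variable such that k and φ are conditionally independent given G. Fix k' ∈ {1,…,K}, let π be a G-measurable version of P(k = k' | G), and suppose π > 0 almost surely. Then for every m ∈ ℝ, almost surely: E[ m − 1{k = k'}·(m − φ)/π | G ] = E[φ | G]. -/
open MeasureTheory

/-- conditional unbiasedness of the importance-weighted estimator:
if `k` and `φ` are conditionally independent given `G` (in the functional sense),
`π` is a positive `G`-measurable version of `P(k = k' | G)`, then for every `m ∈ ℝ`,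
`E[m − 1{k=k'}·(m − φ)/π | G] = E[φ | G]` almost surely. -/
theorem stmt19 {Ω : Type*} (G : MeasurableSpace Ω) {m0 : MeasurableSpace Ω}
    (P : Measure Ω) [IsProbabilityMeasure P]
    (hG : G ≤ m0)
    (K : ℕ) (k : Ω → Fin K) (hk_meas : Measurable k)
    (φ : Ω → ℝ) (hφ_meas : Measurable φ) (C : ℝ) (hφ_bdd : ∀ ω, |φ ω| ≤ C)
    (hcondindep : ∀ (h₁ : Fin K → ℝ) (h₂ : ℝ → ℝ), Measurable h₂ →
      (∃ B, ∀ x, |h₂ x| ≤ B) →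
      P[(fun ω => h₁ (k ω) * h₂ (φ ω)) | G] =ᵐ[P]
        fun ω => (P[(fun ω' => h₁ (k ω')) | G]) ω * (P[(fun ω' => h₂ (φ ω')) | G]) ω)
    (k' : Fin K) (π : Ω → ℝ)
    (hπ_meas : StronglyMeasurable[G] π)
    (hπ_ver : π =ᵐ[P] P[(fun ω => if k ω = k' then (1 : ℝ) else 0) | G])
    (hπ_pos : ∀ᵐ ω ∂P, 0 < π ω) :
    ∀ m : ℝ,
      P[(fun ω => m - (if k ω = k' then (1 : ℝ) else 0) * (m - φ ω) / π ω) | G]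
        =ᵐ[P] P[φ | G] := by
  intro m
  classical
  have hk0 : Measurable[m0] k := hk_meas
  have hφ0 : Measurable[m0] φ := hφ_meas
  set I : Ω → ℝ := fun ω => if k ω = k' then (1 : ℝ) else 0 with hIdef
  have hI_meas : Measurable[m0] I := by
    have hs : MeasurableSet[m0] {ω | k ω = k'} := hk0 (MeasurableSet.singleton k')
    exact Measurable.ite hs measurable_const measurable_const
  have hI01 : ∀ ω, 0 ≤ I ω ∧ I ω ≤ 1 := by
    intro ω; by_cases h : k ω = k' <;> simp [hIdef, h]
  have hI_int : Integrable I P := by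
    refine (integrable_const (1:ℝ)).mono' hI_meas.aestronglyMeasurable ?_
    filter_upwards with ω
    rw [Real.norm_eq_abs, abs_of_nonneg (hI01 ω).1]
    exact (hI01 ω).2
  have hπ_meas0 : Measurable[m0] π := (hπ_meas.mono hG).measurable
  have hφ_int : Integrable φ P :=
    (integrable_const C).mono' hφ0.aestronglyMeasurable
      (Filter.Eventually.of_forall fun ω => by simpa using hφ_bdd ω)
  -- truncations
  have hmin_meas : ∀ n : ℕ, StronglyMeasurable[G] (fun ω => min (π ω)⁻¹ (n : ℝ)) :=
    fun n => (hπ_meas.measurable.inv.min measurable_const).stronglyMeasurable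
  have htrunc_int : ∀ n : ℕ, Integrable ((fun ω => min (π ω)⁻¹ (n:ℝ)) * I) P := by
    intro n
    refine (integrable_const (n:ℝ)).mono'
      ((((hmin_meas n).mono hG).measurable.mul hI_meas).aestronglyMeasurable) ?_
    filter_upwards [hπ_pos] with ω hπω
    have h0 : 0 ≤ min (π ω)⁻¹ (n:ℝ) := le_min (by positivity) (by positivity)
    rw [Pi.mul_apply, Real.norm_eq_abs, abs_of_nonneg (mul_nonneg h0 (hI01 ω).1)]
    calc min (π ω)⁻¹ (n:ℝ) * I ω ≤ (n:ℝ) * 1 :=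
          mul_le_mul (min_le_right _ _) (hI01 ω).2 (hI01 ω).1 (by positivity)
      _ = n := mul_one _
  have hbound : ∀ n : ℕ, ∫ ω, ((fun ω => min (π ω)⁻¹ (n:ℝ)) * I) ω ∂P ≤ 1 := by
    intro n
    have hpull := condExp_mul_of_stronglyMeasurable_left (μ := P) (hmin_meas n) (htrunc_int n) hI_int
    have hle : (P[(fun ω => min (π ω)⁻¹ (n:ℝ)) * I|G]) ≤ᵐ[P] fun _ => (1:ℝ) := by
      filter_upwards [hpull, hπ_ver, hπ_pos] with ω hpω hvω hπω
      rw [hpω, Pi.mul_apply, ← hvω]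
      have h1 : min (π ω)⁻¹ (n:ℝ) * π ω ≤ (π ω)⁻¹ * π ω :=
        mul_le_mul_of_nonneg_right (min_le_left _ _) hπω.le
      rw [inv_mul_cancel₀ hπω.ne'] at h1
      exact h1
    have h2 : ∫ ω, (P[(fun ω => min (π ω)⁻¹ (n:ℝ)) * I|G]) ω ∂P ≤ ∫ _, (1:ℝ) ∂P :=
      integral_mono_ae integrable_condExp (integrable_const 1) hle
    rw [integral_condExp hG] at h2
    simpa using h2
  -- lintegral bound
  have hlin : ∫⁻ ω, ENNReal.ofReal (I ω * (π ω)⁻¹) ∂P ≤ 1 := by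
    set F : ℕ → Ω → ENNReal := fun n ω => ENNReal.ofReal (min (π ω)⁻¹ (n:ℝ) * I ω) with hF
    have hFmeas : ∀ n, AEMeasurable (F n) P := fun n =>
      (ENNReal.measurable_ofReal.comp
        (((hmin_meas n).mono hG).measurable.mul hI_meas)).aemeasurable
    have hFmono : ∀ᵐ ω ∂P, Monotone fun n => F n ω := by
      filter_upwards [hπ_pos] with ω hπω
      intro a b hab
      apply ENNReal.ofReal_le_ofReal
      exact mul_le_mul_of_nonneg_right (min_le_min le_rfl (Nat.cast_le.mpr hab)) (hI01 ω).1
    have hsup : ∀ᵐ ω ∂P, (⨆ n, F n ω) = ENNReal.ofReal (I ω * (π ω)⁻¹) := by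
      filter_upwards [hπ_pos] with ω hπω
      apply le_antisymm
      · refine iSup_le fun n => ENNReal.ofReal_le_ofReal ?_
        rw [mul_comm (I ω)]
        exact mul_le_mul_of_nonneg_right (min_le_left _ _) (hI01 ω).1
      · have hnat : (π ω)⁻¹ ≤ (⌈(π ω)⁻¹⌉₊ : ℝ) := Nat.le_ceil _
        have hEq : F ⌈(π ω)⁻¹⌉₊ ω = ENNReal.ofReal (I ω * (π ω)⁻¹) := by
          simp only [hF]
          rw [min_eq_left hnat, mul_comm]
        exact hEq ▸ le_iSup (fun n => F n ω) _
    calc ∫⁻ ω, ENNReal.ofReal (I ω * (π ω)⁻¹) ∂P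
        = ∫⁻ ω, ⨆ n, F n ω ∂P := (lintegral_congr_ae hsup).symm
      _ = ⨆ n, ∫⁻ ω, F n ω ∂P := lintegral_iSup' hFmeas hFmono
      _ ≤ 1 := by
          refine iSup_le fun n => ?_
          have hnn : 0 ≤ᵐ[P] ((fun ω => min (π ω)⁻¹ (n:ℝ)) * I) := by
            filter_upwards [hπ_pos] with ω hπω
            exact mul_nonneg (le_min (by positivity) (by positivity)) (hI01 ω).1
          have hofr := ofReal_integral_eq_lintegral_ofReal (htrunc_int n) hnn
          calc ∫⁻ ω, F n ω ∂P
              = ENNReal.ofReal (∫ ω, ((fun ω => min (π ω)⁻¹ (n:ℝ)) * I) ω ∂P) := hofr.symm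
            _ ≤ ENNReal.ofReal 1 := ENNReal.ofReal_le_ofReal (hbound n)
            _ = 1 := ENNReal.ofReal_one
  have key : Integrable (fun ω => I ω * (π ω)⁻¹) P := by
    refine ⟨(hI_meas.mul hπ_meas0.inv).aestronglyMeasurable, ?_⟩
    rw [hasFiniteIntegral_iff_norm]
    have heq : ∫⁻ ω, ENNReal.ofReal ‖I ω * (π ω)⁻¹‖ ∂P
        = ∫⁻ ω, ENNReal.ofReal (I ω * (π ω)⁻¹) ∂P := by
      refine lintegral_congr_ae ?_
      filter_upwards [hπ_pos] with ω hπω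
      rw [Real.norm_eq_abs, abs_of_nonneg (mul_nonneg (hI01 ω).1 (by positivity))]
    rw [heq]
    exact lt_of_le_of_lt hlin ENNReal.one_lt_top
  -- integrabilities for main computation
  set g : Ω → ℝ := fun ω => I ω * (m - φ ω) with hgdef
  set pinv : Ω → ℝ := fun ω => (π ω)⁻¹ with hpinvdef
  have hg_meas : Measurable[m0] g := hI_meas.mul (measurable_const.sub hφ0)
  have hg_int : Integrable g P := by
    refine (integrable_const (|m| + C)).mono' hg_meas.aestronglyMeasurable ?_
    filter_upwards with ω
    have hmb : |m - φ ω| ≤ |m| + C := (abs_sub m (φ ω)).trans (by linarith [hφ_bdd ω])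
    rw [hgdef]
    simp only []
    rw [Real.norm_eq_abs, abs_mul, abs_of_nonneg (hI01 ω).1]
    calc I ω * |m - φ ω| ≤ 1 * (|m| + C) :=
          mul_le_mul (hI01 ω).2 hmb (abs_nonneg _) zero_le_one
      _ = |m| + C := one_mul _
  have hpinv_meas : StronglyMeasurable[G] pinv := hπ_meas.measurable.inv.stronglyMeasurable
  have hg'_int : Integrable (pinv * g) P := by
    refine (key.const_mul (|m| + C)).mono'
      ((hπ_meas0.inv.mul hg_meas).aestronglyMeasurable) ?_
    filter_upwards [hπ_pos] with ω hπω
    have hmb : |m - φ ω| ≤ |m| + C := (abs_sub m (φ ω)).trans (by linarith [hφ_bdd ω])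
    rw [Pi.mul_apply, Real.norm_eq_abs, hpinvdef, hgdef]
    simp only []
    rw [abs_mul, abs_mul, abs_of_nonneg (hI01 ω).1, abs_of_nonneg (inv_nonneg.2 hπω.le)]
    have h0C : 0 ≤ |m| + C := le_trans (abs_nonneg _) hmb
    calc (π ω)⁻¹ * (I ω * |m - φ ω|) ≤ (π ω)⁻¹ * (I ω * (|m| + C)) := by
          apply mul_le_mul_of_nonneg_left _ (by positivity)
          exact mul_le_mul_of_nonneg_left hmb (hI01 ω).1
      _ = (|m| + C) * (I ω * (π ω)⁻¹) := by ring
  -- conditional independence step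
  have hmeas2 : Measurable (fun x : ℝ => m - max (-C) (min C x)) :=
    measurable_const.sub (measurable_const.max (measurable_const.min measurable_id))
  have hbdd2 : ∀ x : ℝ, |m - max (-C) (min C x)| ≤ |m| + |C| := by
    intro x
    have h1 : -|C| ≤ max (-C) (min C x) :=
      le_trans (neg_le_neg (le_abs_self C)) (le_max_left _ _)
    have h2 : max (-C) (min C x) ≤ |C| :=
      max_le (neg_le_abs C) ((min_le_left _ _).trans (le_abs_self C))
    calc |m - max (-C) (min C x)| ≤ |m| + |max (-C) (min C x)| := abs_sub _ _
      _ ≤ |m| + |C| := by have := abs_le.mpr ⟨h1, h2⟩; linarith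
  have hcond := hcondindep (fun j => if j = k' then (1:ℝ) else 0)
    (fun x => m - max (-C) (min C x)) hmeas2 ⟨|m| + |C|, hbdd2⟩
  have e1 : (fun ω => if k ω = k' then (1:ℝ) else 0) = I := hIdef.symm
  have e2 : (fun ω => m - max (-C) (min C (φ ω))) = (fun _ => m) - φ := by
    funext ω
    have h := abs_le.mp (hφ_bdd ω)
    rw [min_eq_right h.2, max_eq_right h.1, Pi.sub_apply]
  simp only [e1, e2] at hcond
  have gfun_eq : g = fun ω => I ω * (m - max (-C) (min C (φ ω))) := by
    funext ω
    have h := abs_le.mp (hφ_bdd ω)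
    rw [hgdef]
    simp only []
    rw [min_eq_right h.2, max_eq_right h.1]
  have hcφ : P[(fun _ => m) - φ|G] =ᵐ[P] fun ω => m - (P[φ|G]) ω := by
    have h := condExp_sub (μ := P) (m := G) (integrable_const m) hφ_int
    filter_upwards [h] with ω hω
    rw [hω, Pi.sub_apply, condExp_const hG]
  have C1 : P[g|G] =ᵐ[P] fun ω => π ω * (m - (P[φ|G]) ω) := by
    rw [gfun_eq]
    filter_upwards [hcond, hπ_ver, hcφ] with ω h1 h2 h3
    rw [h1, ← h2, h3]
  -- final assembly
  have hfun : (fun ω => m - (if k ω = k' then (1 : ℝ) else 0) * (m - φ ω) / π ω)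
      = (fun _ => m) - pinv * g := by
    funext ω
    simp only [Pi.sub_apply, Pi.mul_apply, hgdef, hpinvdef, hIdef]
    ring
  rw [hfun]
  have A := condExp_sub (μ := P) (m := G) (integrable_const m) hg'_int
  have B := condExp_mul_of_stronglyMeasurable_left (μ := P) hpinv_meas hg'_int hg_int
  refine A.trans ?_
  filter_upwards [B, C1, hπ_pos] with ω hB hC hπω
  rw [Pi.sub_apply, condExp_const hG, hB, Pi.mul_apply, hC]
  rw [hpinvdef]
  simp only []
  rw [inv_mul_cancel_left₀ hπω.ne']
  ring
end
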